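/- arXiv:1904.05702 — 2 statements merged into one kernel-verified Lean document; each statement's English description precedes it below -/
import Mathlib

section
/- Let a_{ij}, b_{ij} (for integers i,j ≥ 0 with i+j ≤ 3) be arbitrary real constants (the smooth case, where the coefficients on the two sides of the switching line coincide), and define f : (0,∞) → ℝ by f(r) = Σ_{0 ≤ i+j ≤ 3} ∫₀^{2π} (a_{ij} r^{i+j} cos^{i+1}θ sin^j θ + b_{ij} r^{i+j} cos^i θ sin^{j+1}θ)/(r² cos²θ + 1) dθ. If f is not identically zero on (0,∞), then f has at most 3 zeros in (0,∞). -/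
/-!
Averaging the integrand over the four symmetries `θ ↦ θ, 2π - θ, θ + π, π - θ` of the circle kills
every monomial `cos^p θ sin^q θ` with `p` or `q` odd. With `u = √(r² + 1)` the denominator becomes
`u² cos² θ + sin² θ`, and the five surviving even moments reduce to the classical integral
`∫₀^{2π} dθ / (u² cos² θ + sin² θ) = 2π / u`. The result is `f r = π r / (u (u + 1)) · P u` for an
explicit cubic polynomial `P`. As `r ↦ u` is injective on `(0, ∞)`, the zeros of `f` there inject
into the roots of `P`, and `P ≠ 0` because `f` does not vanish identically.
-/

open Real Polynomial

theorem mul_cos_sq_add_mul_sin_sq_pos {p q : ℝ} (hp : 0 < p) (hq : 0 < q) (θ : ℝ) :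
    0 < p * cos θ ^ 2 + q * sin θ ^ 2 := by
  rcases le_total p q with h | h <;>
    nlinarith [cos_sq_add_sin_sq θ, mul_le_mul_of_nonneg_right h (sq_nonneg (cos θ)),
      mul_le_mul_of_nonneg_right h (sq_nonneg (sin θ))]

theorem integral_one_div_sq_mul_cos_sq_add_sq_mul_sin_sq {a b : ℝ} (ha : 0 < a) (hb : 0 < b) :
    ∫ θ in (0:ℝ)..2 * π, 1 / (a ^ 2 * cos θ ^ 2 + b ^ 2 * sin θ ^ 2) = 2 * π / (a * b) := by
  have hE := mul_cos_sq_add_mul_sin_sq_pos ha hb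
  have hD := mul_cos_sq_add_mul_sin_sq_pos (pow_pos ha 2) (pow_pos hb 2)
  -- continuous on all of `ℝ`, unlike `arctan (a / b * tan θ) / (a * b)`
  let G : ℝ → ℝ := fun θ =>
    (θ - arctan ((a - b) * sin θ * cos θ / (a * cos θ ^ 2 + b * sin θ ^ 2))) / (a * b)
  have hG : ∀ θ, HasDerivAt G (1 / (a ^ 2 * cos θ ^ 2 + b ^ 2 * sin θ ^ 2)) θ := fun θ => by
    have hN : HasDerivAt (fun t => (a - b) * sin t * cos t)
        ((a - b) * cos θ * cos θ + (a - b) * sin θ * -sin θ) θ :=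
      ((hasDerivAt_sin θ).const_mul (a - b)).mul (hasDerivAt_cos θ)
    have hE' : HasDerivAt (fun t => a * cos t ^ 2 + b * sin t ^ 2)
        (2 * (b - a) * sin θ * cos θ) θ :=
      ((((hasDerivAt_cos θ).pow 2).const_mul a).add
        (((hasDerivAt_sin θ).pow 2).const_mul b)).congr_deriv (by ring)
    refine (((hasDerivAt_id θ).sub (hN.div hE' (hE θ).ne').arctan).div_const (a * b)).congr_deriv ?_
    rw [Pi.div_apply]
    have hE0 := (hE θ).ne'
    have hD0 := (hD θ).ne'
    generalize hEdef : a * cos θ ^ 2 + b * sin θ ^ 2 = E at hE0 ⊢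
    generalize hDdef : a ^ 2 * cos θ ^ 2 + b ^ 2 * sin θ ^ 2 = D at hD0 ⊢
    -- key identity: `E² + ((a - b) sin θ cos θ)² = (cos² θ + sin² θ) D`
    field_simp
    subst hEdef hDdef
    linear_combination a * b * (a ^ 2 * cos θ ^ 2 + b ^ 2 * sin θ ^ 2) * (cos θ ^ 2 + sin θ ^ 2) *
      cos_sq_add_sin_sq θ
  rw [intervalIntegral.integral_eq_sub_of_hasDerivAt (fun θ _ => hG θ)
    ((continuous_const.div (by fun_prop) fun θ => (hD θ).ne').intervalIntegrable _ _)]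
  simp [G]

theorem integral_quartic_div_sq_mul_cos_sq_add_sin_sq {u : ℝ} (hu : 0 < u) (hu1 : u ≠ 1)
    (p₄₀ p₂₂ p₀₄ p₂₀ p₀₂ : ℝ) :
    ∫ θ in (0:ℝ)..2 * π, (p₄₀ * cos θ ^ 4 + p₂₂ * cos θ ^ 2 * sin θ ^ 2 + p₀₄ * sin θ ^ 4
        + p₂₀ * cos θ ^ 2 + p₀₂ * sin θ ^ 2) / (u ^ 2 * cos θ ^ 2 + sin θ ^ 2)
      = π * (p₄₀ * (u + 2) / (u * (u + 1) ^ 2) + p₂₂ / (u + 1) ^ 2 + p₀₄ * (2 * u + 1) / (u + 1) ^ 2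
        + 2 * p₂₀ / (u * (u + 1)) + 2 * p₀₂ / (u + 1)) := by
  have hk : u ^ 2 - 1 ≠ 0 := fun h => hu1 (by nlinarith)
  have hD := mul_cos_sq_add_mul_sin_sq_pos (pow_pos hu 2) one_pos
  -- With `sin² = 1 - cos²` the numerator is `A cos⁴ + B cos² + C` and the denominator is
  -- `(u² - 1) cos² + 1`; divide with remainder.
  set A := p₄₀ - p₂₂ + p₀₄
  set B := p₂₂ - 2 * p₀₄ + p₂₀ - p₀₂
  set C := p₀₄ + p₀₂
  set β := A / (u ^ 2 - 1)
  set α := (B - β) / (u ^ 2 - 1)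
  have hsplit : ∀ θ, (p₄₀ * cos θ ^ 4 + p₂₂ * cos θ ^ 2 * sin θ ^ 2 + p₀₄ * sin θ ^ 4
        + p₂₀ * cos θ ^ 2 + p₀₂ * sin θ ^ 2) / (u ^ 2 * cos θ ^ 2 + sin θ ^ 2)
      = (α + β * cos θ ^ 2) + (C - α) * (1 / (u ^ 2 * cos θ ^ 2 + 1 ^ 2 * sin θ ^ 2)) := fun θ => by
    have hnum : p₄₀ * cos θ ^ 4 + p₂₂ * cos θ ^ 2 * sin θ ^ 2 + p₀₄ * sin θ ^ 4
        + p₂₀ * cos θ ^ 2 + p₀₂ * sin θ ^ 2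
        = (α + β * cos θ ^ 2) * (u ^ 2 * cos θ ^ 2 + sin θ ^ 2) + (C - α) := by
      rw [show sin θ ^ 4 = (sin θ ^ 2) ^ 2 by ring, sin_sq]
      simp only [α, β, A, B, C]
      field_simp
      ring
    rw [hnum, add_div, mul_div_cancel_right₀ _ (by simpa using (hD θ).ne'), one_pow, one_mul,
      ← div_eq_mul_one_div]
  simp_rw [hsplit]
  rw [intervalIntegral.integral_add, intervalIntegral.integral_add, intervalIntegral.integral_const,
    intervalIntegral.integral_const_mul, intervalIntegral.integral_const_mul, integral_cos_sq,
    integral_one_div_sq_mul_cos_sq_add_sq_mul_sin_sq hu one_pos]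
  · simp only [α, β, A, B, C, sin_two_pi, cos_zero, sin_zero, smul_eq_mul]
    have : u + 1 ≠ 0 := by positivity
    have := hu.ne'
    field_simp
    ring
  all_goals
    refine Continuous.intervalIntegrable ?_ _ _
    fun_prop (disch := exact fun θ => by simpa using (hD θ).ne')

theorem integral_comp_add_pi_of_periodic {g : ℝ → ℝ} (hg : Function.Periodic g (2 * π)) :
    ∫ θ in (0:ℝ)..2 * π, g (θ + π) = ∫ θ in (0:ℝ)..2 * π, g θ := by
  rw [intervalIntegral.integral_comp_add_right, zero_add, show 2 * π + π = π + 2 * π by ring,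
    hg.intervalIntegral_add_eq π 0, zero_add]

theorem integral_comp_pi_sub_of_periodic {g : ℝ → ℝ} (hg : Function.Periodic g (2 * π)) :
    ∫ θ in (0:ℝ)..2 * π, g (π - θ) = ∫ θ in (0:ℝ)..2 * π, g θ := by
  rw [intervalIntegral.integral_comp_sub_left, sub_zero]
  simpa using hg.intervalIntegral_add_eq (π - 2 * π) 0

theorem integral_eq_integral_average_of_periodic {g : ℝ → ℝ} (hg : Function.Periodic g (2 * π))
    (hc : Continuous g) :
    ∫ θ in (0:ℝ)..2 * π, g θ
      = ∫ θ in (0:ℝ)..2 * π, (g θ + g (2 * π - θ) + g (θ + π) + g (π - θ)) / 4 := by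
  have hi : ∀ φ : ℝ → ℝ, Continuous φ →
      IntervalIntegrable (fun θ => g (φ θ)) MeasureTheory.volume 0 (2 * π) :=
    fun φ hφ => (hc.comp hφ).intervalIntegrable _ _
  have h₀ := hc.intervalIntegrable (μ := MeasureTheory.volume) 0 (2 * π)
  have h₁ := hi (fun θ => 2 * π - θ) (by fun_prop)
  have h₂ := hi (fun θ => θ + π) (by fun_prop)
  have h₃ := hi (fun θ => π - θ) (by fun_prop)
  rw [intervalIntegral.integral_div, intervalIntegral.integral_add ((h₀.add h₁).add h₂) h₃,
    intervalIntegral.integral_add (h₀.add h₁) h₂, intervalIntegral.integral_add h₀ h₁,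
    intervalIntegral.integral_comp_sub_left, sub_zero, sub_self,
    integral_comp_add_pi_of_periodic hg, integral_comp_pi_sub_of_periodic hg]
  ring

noncomputable def averagedFunction (a b : ℕ → ℕ → ℝ) (r : ℝ) : ℝ :=
  ∑ i ∈ Finset.range 4, ∑ j ∈ Finset.range (4 - i),
    ∫ θ in (0:ℝ)..(2 * π),
      (a i j * r ^ (i + j) * cos θ ^ (i + 1) * sin θ ^ j
        + b i j * r ^ (i + j) * cos θ ^ i * sin θ ^ (j + 1)) / (r ^ 2 * cos θ ^ 2 + 1)

theorem averagedFunction_eq_integral_even_part (a b : ℕ → ℕ → ℝ) (r : ℝ) :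
    averagedFunction a b r = ∫ θ in (0:ℝ)..2 * π,
      (r ^ 3 * a 3 0 * cos θ ^ 4 + r ^ 3 * (a 1 2 + b 2 1) * cos θ ^ 2 * sin θ ^ 2
        + r ^ 3 * b 0 3 * sin θ ^ 4 + r * a 1 0 * cos θ ^ 2 + r * b 0 1 * sin θ ^ 2)
        / (r ^ 2 * cos θ ^ 2 + 1) := by
  have hD : ∀ θ, r ^ 2 * cos θ ^ 2 + 1 ≠ 0 := fun θ => by positivity
  have hcont : ∀ i j, Continuous fun θ => (a i j * r ^ (i + j) * cos θ ^ (i + 1) * sin θ ^ j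
      + b i j * r ^ (i + j) * cos θ ^ i * sin θ ^ (j + 1)) / (r ^ 2 * cos θ ^ 2 + 1) :=
    fun i j => by fun_prop (disch := exact hD)
  have hcont' : ∀ i, Continuous fun θ => ∑ j ∈ Finset.range (4 - i),
      (a i j * r ^ (i + j) * cos θ ^ (i + 1) * sin θ ^ j
        + b i j * r ^ (i + j) * cos θ ^ i * sin θ ^ (j + 1)) / (r ^ 2 * cos θ ^ 2 + 1) :=
    fun i => continuous_finsetSum _ fun j _ => hcont i j
  rw [averagedFunction]
  simp_rw [← intervalIntegral.integral_finsetSum fun j _ =>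
    (hcont _ j).intervalIntegrable 0 (2 * π)]
  rw [← intervalIntegral.integral_finsetSum fun i _ => (hcont' i).intervalIntegrable 0 (2 * π),
    integral_eq_integral_average_of_periodic
      (fun θ => by simp only [cos_add_two_pi, sin_add_two_pi])
      (continuous_finsetSum _ fun i _ => hcont' i)]
  refine intervalIntegral.integral_congr fun θ _ => ?_
  simp only [Finset.sum_range_succ, Finset.sum_range_zero, sin_two_pi_sub, cos_two_pi_sub,
    sin_add_pi, cos_add_pi, sin_pi_sub, cos_pi_sub]
  ring

noncomputable def averagedPoly (a b : ℕ → ℕ → ℝ) : ℝ[X] :=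
  C (2 * a 1 0) + C (2 * b 0 1) * X + C (a 1 2 + b 2 1) * X * (X - 1)
    + C (a 3 0) * (X - 1) * (X + 2) + C (b 0 3) * X * (X - 1) * (2 * X + 1)

theorem natDegree_averagedPoly_le (a b : ℕ → ℕ → ℝ) : (averagedPoly a b).natDegree ≤ 3 := by
  unfold averagedPoly
  compute_degree

theorem averagedFunction_eq_mul_eval (a b : ℕ → ℕ → ℝ) {r : ℝ} (hr : 0 < r) :
    averagedFunction a b r = π * r / (√(r ^ 2 + 1) * (√(r ^ 2 + 1) + 1))
      * (averagedPoly a b).eval √(r ^ 2 + 1) := by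
  set u := √(r ^ 2 + 1)
  have hu2 : u ^ 2 = r ^ 2 + 1 := sq_sqrt (by positivity)
  have hu1 : 1 < u := by rw [lt_sqrt zero_le_one]; nlinarith
  have hden : ∀ θ, r ^ 2 * cos θ ^ 2 + 1 = u ^ 2 * cos θ ^ 2 + sin θ ^ 2 := fun θ => by
    rw [hu2]; linear_combination -cos_sq_add_sin_sq θ
  simp_rw [averagedFunction_eq_integral_even_part, hden]
  rw [integral_quartic_div_sq_mul_cos_sq_add_sin_sq (by positivity) hu1.ne',
    show r ^ 3 = r * (u ^ 2 - 1) by rw [hu2]; ring]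
  simp only [averagedPoly, eval_add, eval_mul, eval_C, eval_X, eval_sub, eval_one, eval_ofNat]
  have : u + 1 ≠ 0 := by positivity
  have : u ≠ 0 := by positivity
  field_simp
  ring

theorem Polynomial.exists_finset_card_le_natDegree_of_leftInvOn {α R : Type*} [CommRing R]
    [IsDomain R] {p : R[X]} (hp : p ≠ 0) {Z : Set α} {φ : α → R} {ψ : R → α}
    (hroot : ∀ z ∈ Z, p.IsRoot (φ z)) (hψ : Set.LeftInvOn ψ φ Z) :
    ∃ S : Finset α, S.card ≤ p.natDegree ∧ Z ⊆ S := by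
  classical
  refine ⟨p.roots.toFinset.image ψ, ?_, fun z hz => ?_⟩
  · exact Finset.card_image_le.trans ((Multiset.toFinset_card_le _).trans (card_roots' p))
  · rw [Finset.mem_coe, ← hψ hz]
    exact Finset.mem_image_of_mem ψ (Multiset.mem_toFinset.2 ((mem_roots hp).2 (hroot z hz)))

/-- In the smooth case (equal coefficients on both sides of the
switching line), if the first-order averaged function is not identically zero
on `(0, ∞)`, then it has at most 3 zeros in `(0, ∞)`. -/
theorem averaged_function_smooth_at_most_three_zeros
    (a b : ℕ → ℕ → ℝ) (f : ℝ → ℝ)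
    (hf : ∀ r : ℝ, f r =
      ∑ i ∈ Finset.range 4, ∑ j ∈ Finset.range (4 - i),
        ∫ θ in (0:ℝ)..(2 * Real.pi),
          (a i j * r ^ (i + j) * Real.cos θ ^ (i + 1) * Real.sin θ ^ j
            + b i j * r ^ (i + j) * Real.cos θ ^ i * Real.sin θ ^ (j + 1))
            / (r ^ 2 * Real.cos θ ^ 2 + 1))
    (hne : ¬ ∀ r ∈ Set.Ioi (0:ℝ), f r = 0) :
    ∃ S : Finset ℝ, S.card ≤ 3 ∧ ∀ r ∈ Set.Ioi (0:ℝ), f r = 0 → r ∈ S := by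
  have hf' : ∀ r, 0 < r →
      f r = π * r / (√(r ^ 2 + 1) * (√(r ^ 2 + 1) + 1)) * (averagedPoly a b).eval √(r ^ 2 + 1) :=
    fun r hr => (hf r).trans (averagedFunction_eq_mul_eval a b hr)
  have hP : averagedPoly a b ≠ 0 := fun hP =>
    hne fun r hr => by rw [hf' r hr, hP, eval_zero, mul_zero]
  obtain ⟨S, hcard, hS⟩ := exists_finset_card_le_natDegree_of_leftInvOn hP
    (Z := {r | 0 < r ∧ f r = 0}) (φ := fun r => √(r ^ 2 + 1)) (ψ := fun u => √(u ^ 2 - 1))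
    (fun r ⟨hr, hfr⟩ => by
      rw [hf' r hr] at hfr
      exact (mul_eq_zero.1 hfr).resolve_left (by positivity))
    (fun r ⟨hr, _⟩ => show √(√(r ^ 2 + 1) ^ 2 - 1) = r by
      rw [sq_sqrt (by positivity), add_sub_cancel_right, sqrt_sq hr.le])
  exact ⟨S, hcard.trans (natDegree_averagedPoly_le a b), fun r hr hfr => hS ⟨hr, hfr⟩⟩
end

section
/- For all real r > 0, g₃(r) > 0, where g₃(r) = 3120r¹¹ arctan r − 4864r¹⁰√(r²+1) + 10500r⁹ arctan r + 3120r¹⁰ − 14048r⁸√(r²+1) + 13155r⁷ arctan r + 9460r⁸ − 14224r⁶√(r²+1) + 7350r⁵ arctan r + 10279r⁶ − 6020r⁴√(r²+1) + 1575r³ arctan r + 4985r⁴ − 1120r²√(r²+1) + 1200r² − 160√(r²+1) + 160. -/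
/-!
Write `g₃(r) = A(r) arctan r - B(r) √(r² + 1) + C(r)` with polynomials `A, B ≥ 0` on
`[0, ∞)`. Replacing `arctan r` by a lower bound and `√(r² + 1)` by an upper bound can only
decrease `g₃`, and with sharp enough bounds the result is a rational function of `r` that is
still positive. Since `g₃(r) ~ 35 r⁸ / 4` at `0` while
`g₃(r) / (3120 r¹¹) → π / 2 - 4864 / 3120 ≈ 0.012`, the arctangent is bounded in three regimes:
* on `(0, 1/2)` by its Taylor polynomial at `0`;
* on `[1/2, 3/2)` through `arctan r = arctan (1/2) + arctan ((r - 1/2) / (1 + r/2))`;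
* on `[3/2, ∞)` through `arctan r = π / 2 - arctan r⁻¹` and `π > 3.141592`.
The square root is bounded by AM-GM, `√x ≤ (x + c²) / (2c)`, with `c` close to `√(r² + 1)`.
The rational function is shown positive on `[a, b)` by substituting `r = (a + b t) / (1 + t)`
(or `r = a + t` when `b = ∞`): its numerator becomes a polynomial in `t ≥ 0` with nonnegative
coefficients.
-/

open Real Set
open Finset (range sum_congr sum_range_succ)

noncomputable def arctanTaylor (n : ℕ) (x : ℝ) : ℝ :=
  ∑ k ∈ range n, (-1) ^ k * x ^ (2 * k + 1) / (2 * k + 1)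

theorem hasDerivAt_arctanTaylor (n : ℕ) (x : ℝ) :
    HasDerivAt (arctanTaylor n) (∑ k ∈ range n, (-x ^ 2) ^ k) x := by
  refine (HasDerivAt.fun_sum fun k _ ↦ ((hasDerivAt_pow (2 * k + 1) x).const_mul
    ((-1 : ℝ) ^ k)).div_const (2 * k + 1)).congr_deriv (sum_congr rfl fun k _ ↦ ?_)
  rw [Nat.add_sub_cancel, neg_pow (x ^ 2), ← pow_mul]
  push_cast
  field_simp

theorem inv_one_add_sq_sub_geom_sum (n : ℕ) (x : ℝ) :
    (1 + x ^ 2)⁻¹ - ∑ k ∈ range n, (-x ^ 2) ^ k = (-x ^ 2) ^ n / (1 + x ^ 2) := by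
  rw [eq_div_iff (by positivity), sub_mul, inv_mul_cancel₀ (by positivity)]
  linear_combination -mul_neg_geom_sum (-x ^ 2) n

theorem neg_one_pow_mul_arctan_sub_arctanTaylor_nonneg (n : ℕ) {x : ℝ} (hx : 0 ≤ x) :
    0 ≤ (-1) ^ n * (arctan x - arctanTaylor n x) := by
  have hmono : Monotone fun y ↦ (-1) ^ n * (arctan y - arctanTaylor n y) := by
    refine monotone_of_hasDerivAt_nonneg
      (fun y ↦ ((hasDerivAt_arctan y).sub (hasDerivAt_arctanTaylor n y)).const_mul _) fun y ↦ ?_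
    simp only [one_div, inv_one_add_sq_sub_geom_sum, Pi.zero_apply]
    rw [← mul_div_assoc, ← mul_pow, neg_one_mul, neg_neg]
    positivity
  simpa [arctanTaylor] using hmono hx

theorem arctanTaylor_le_arctan {n : ℕ} (hn : Even n) {x : ℝ} (hx : 0 ≤ x) :
    arctanTaylor n x ≤ arctan x := by
  simpa [hn.neg_one_pow] using neg_one_pow_mul_arctan_sub_arctanTaylor_nonneg n hx

theorem arctan_le_arctanTaylor {n : ℕ} (hn : Odd n) {x : ℝ} (hx : 0 ≤ x) :
    arctan x ≤ arctanTaylor n x := by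
  simpa [hn.neg_one_pow] using neg_one_pow_mul_arctan_sub_arctanTaylor_nonneg n hx

theorem arctan_eq_arctan_add_arctan_div {a r : ℝ} (h : 0 < 1 + a * r) :
    arctan r = arctan a + arctan ((r - a) / (1 + a * r)) := by
  have hne : 1 + a * r ≠ 0 := h.ne'
  have hden : 1 - a * ((r - a) / (1 + a * r)) = (1 + a ^ 2) / (1 + a * r) := by
    field_simp
    ring
  rw [arctan_add (sub_pos.1 (by rw [hden]; positivity)), hden, add_div' _ _ _ hne,
    div_div_div_cancel_right₀ hne]
  congr 1
  rw [eq_div_iff (by positivity)]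
  ring

theorem sqrt_le_add_sq_div {x c : ℝ} (hx : 0 ≤ x) (hc : 0 < c) :
    √x ≤ (x + c ^ 2) / (2 * c) := by
  rw [le_div_iff₀ (by positivity)]
  nlinarith [two_mul_le_add_sq c √x, sq_sqrt hx]

theorem div_one_add_div_sub_eq {a b r : ℝ} (hab : a ≠ b) (hrb : r ≠ b) :
    (a + b * ((r - a) / (b - r))) / (1 + (r - a) / (b - r)) = r := by
  have hne : b - r ≠ 0 := sub_ne_zero.2 hrb.symm
  rw [one_add_div hne, sub_add_sub_cancel,
    div_eq_iff (div_ne_zero (sub_ne_zero.2 hab.symm) hne)]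
  field_simp
  ring

def g3Poly (r a s : ℝ) : ℝ :=
  (3120 * r ^ 11 + 10500 * r ^ 9 + 13155 * r ^ 7 + 7350 * r ^ 5 + 1575 * r ^ 3) * a
    - (4864 * r ^ 10 + 14048 * r ^ 8 + 14224 * r ^ 6 + 6020 * r ^ 4 + 1120 * r ^ 2 + 160) * s
    + (3120 * r ^ 10 + 9460 * r ^ 8 + 10279 * r ^ 6 + 4985 * r ^ 4 + 1200 * r ^ 2 + 160)

noncomputable def g3 (r : ℝ) : ℝ := g3Poly r (arctan r) √(r ^ 2 + 1)

theorem g3Poly_le_g3Poly {r a a' s s' : ℝ} (hr : 0 ≤ r) (ha : a ≤ a') (hs : s' ≤ s) :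
    g3Poly r a s ≤ g3Poly r a' s' := by
  unfold g3Poly
  gcongr

theorem g3Poly_pos_of_mem_Ioo {r : ℝ} (h : r ∈ Ioo 0 (1 / 2)) :
    0 < g3Poly r (arctanTaylor 6 r)
      ((r ^ 2 + 1 + (1 + r ^ 2 / 2) ^ 2) / (2 * (1 + r ^ 2 / 2))) := by
  obtain ⟨t, ht, rfl⟩ : ∃ t > 0, (0 + 1 / 2 * t) / (1 + t) = r :=
    ⟨_, div_pos (by linarith [h.1]) (by linarith [h.2]),
      div_one_add_div_sub_eq (by norm_num) h.2.ne⟩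
  norm_num [g3Poly, arctanTaylor, sum_range_succ]
  field_simp
  rw [← sub_pos]
  ring_nf
  positivity

-- `(16 r² + 41) / 40` equals `√(r² + 1)` at `r = 3/4`.
theorem g3Poly_pos_of_mem_Ico {r : ℝ} (h : r ∈ Ico (1 / 2) (3 / 2)) :
    0 < g3Poly r (arctanTaylor 6 (1 / 2) + arctanTaylor 4 ((r - 1 / 2) / (1 + 1 / 2 * r)))
      ((r ^ 2 + 1 + ((16 * r ^ 2 + 41) / 40) ^ 2) / (2 * ((16 * r ^ 2 + 41) / 40))) := by
  obtain ⟨t, ht, rfl⟩ : ∃ t ≥ 0, (1 / 2 + 3 / 2 * t) / (1 + t) = r :=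
    ⟨_, div_nonneg (by linarith [h.1]) (by linarith [h.2]),
      div_one_add_div_sub_eq (by norm_num) h.2.ne⟩
  norm_num [g3Poly, arctanTaylor, sum_range_succ]
  field_simp
  rw [← sub_pos]
  ring_nf
  positivity

theorem g3Poly_pos_of_mem_Ici {r : ℝ} (h : r ∈ Ici (3 / 2)) :
    0 < g3Poly r (3.141592 / 2 - arctanTaylor 5 r⁻¹)
      ((r ^ 2 + 1 + (r + (2 * r)⁻¹) ^ 2) / (2 * (r + (2 * r)⁻¹))) := by
  obtain ⟨t, ht, rfl⟩ : ∃ t ≥ 0, 3 / 2 + t = r := ⟨r - 3 / 2, sub_nonneg.2 h, by ring⟩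
  norm_num [g3Poly, arctanTaylor, sum_range_succ]
  field_simp
  rw [← sub_pos]
  ring_nf
  positivity

theorem g3_pos_of_mem_Ioo {r : ℝ} (h : r ∈ Ioo 0 (1 / 2)) : 0 < g3 r :=
  (g3Poly_pos_of_mem_Ioo h).trans_le <| g3Poly_le_g3Poly h.1.le
    (arctanTaylor_le_arctan (by decide) h.1.le)
    (sqrt_le_add_sq_div (by positivity) (by positivity))

theorem g3_pos_of_mem_Ico {r : ℝ} (h : r ∈ Ico (1 / 2) (3 / 2)) : 0 < g3 r := by
  have hr : 0 ≤ r := by linarith [h.1]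
  refine (g3Poly_pos_of_mem_Ico h).trans_le <| g3Poly_le_g3Poly hr ?_
    (sqrt_le_add_sq_div (by positivity) (by positivity))
  rw [arctan_eq_arctan_add_arctan_div (a := 1 / 2) (by positivity)]
  exact add_le_add (arctanTaylor_le_arctan (by decide) (by norm_num))
    (arctanTaylor_le_arctan (by decide) (div_nonneg (by linarith [h.1]) (by positivity)))

theorem g3_pos_of_mem_Ici {r : ℝ} (h : r ∈ Ici (3 / 2)) : 0 < g3 r := by
  have hr : 0 < r := lt_of_lt_of_le (by norm_num) h
  refine (g3Poly_pos_of_mem_Ici h).trans_le <| g3Poly_le_g3Poly hr.le ?_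
    (sqrt_le_add_sq_div (by positivity) (by positivity))
  linarith [arctan_inv_of_pos hr, pi_gt_d6,
    arctan_le_arctanTaylor (n := 5) (by decide) (inv_nonneg.2 hr.le)]

/-- For all real `r > 0`, `g₃(r) > 0`, where `g₃` is the factor
appearing in the Wronskian `W[f₁, …, f₇](r) = 1728 g₃(r)/(r²+1)^{35/2}`. -/
theorem g3_pos (r : ℝ) (hr : 0 < r) :
    0 < 3120 * r ^ 11 * Real.arctan r - 4864 * r ^ 10 * Real.sqrt (r ^ 2 + 1)
      + 10500 * r ^ 9 * Real.arctan r + 3120 * r ^ 10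
      - 14048 * r ^ 8 * Real.sqrt (r ^ 2 + 1)
      + 13155 * r ^ 7 * Real.arctan r + 9460 * r ^ 8
      - 14224 * r ^ 6 * Real.sqrt (r ^ 2 + 1)
      + 7350 * r ^ 5 * Real.arctan r + 10279 * r ^ 6
      - 6020 * r ^ 4 * Real.sqrt (r ^ 2 + 1)
      + 1575 * r ^ 3 * Real.arctan r + 4985 * r ^ 4
      - 1120 * r ^ 2 * Real.sqrt (r ^ 2 + 1) + 1200 * r ^ 2
      - 160 * Real.sqrt (r ^ 2 + 1) + 160 := by
  have key : 0 < g3 r := by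
    rcases lt_or_ge r (1 / 2) with h₁ | h₁
    · exact g3_pos_of_mem_Ioo ⟨hr, h₁⟩
    rcases lt_or_ge r (3 / 2) with h₂ | h₂
    · exact g3_pos_of_mem_Ico ⟨h₁, h₂⟩
    · exact g3_pos_of_mem_Ici h₂
  simp only [g3, g3Poly] at key
  linarith
end
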